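/- arXiv:1603.04434 — 10 statements merged into one kernel-verified Lean document; each statement's English description precedes it below -/
import Mathlib

section
/- Let r(n) denote the parity of the number of runs of 1's in the binary representation of n. Then for all n ≥ 0: r(4n) = r(n), r(4n+1) = 1 - r(n), r(4n+2) = r(2n+1), and r(4n+3) = r(2n+1). -/
/-- Digits of the negabinary (base -2) representation, least significant first. -/
def negaDigits (n : ℤ) : List ℕ :=
  if n = 0 then [] else (n % 2).toNat :: negaDigits ((n % 2 - n) / 2)
termination_by 2 * n.natAbs + (if n < 0 then 1 else 0)
decreasing_by split_ifs <;> omega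

/-- Parity of the number of 1's in the negabinary representation of n. -/
def g (n : ℕ) : ℕ := (negaDigits n).sum % 2

/-- The digit at position i in the negabinary representation. -/
def negaDigit (n : ℤ) (i : ℕ) : ℕ := (negaDigits n).getD i 0

/-- Number of runs (maximal blocks) of 1's in the binary representation of n. -/
def runsOfOnes (n : ℕ) : ℕ :=
  ((Finset.range (n + 1)).filter (fun i => n.testBit i ∧ ¬ n.testBit (i + 1))).card

/-- Parity of the number of runs of 1's in the binary representation of n. -/
def r (n : ℕ) : ℕ := runsOfOnes n % 2

/-! `runsOfOnes n` counts the positions `i` where a run of ones ends (bit `i` set, bit `i + 1`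
clear). Dropping the lowest bit shifts these positions down by one and loses only a run ending at
bit `0`, so `runsOfOnes (2 * n) = runsOfOnes n` and `runsOfOnes (2 * n + 1)` gains one exactly when
`n` is even. The four identities follow by applying this twice. -/

open Finset

theorem runsOfOnes_eq_card_range {n N : ℕ} (h : n < N) :
    runsOfOnes n = #{i ∈ range N | n.testBit i ∧ ¬ n.testBit (i + 1)} := by
  unfold runsOfOnes
  congr 1
  ext i
  simp only [mem_filter, mem_range, and_congr_left_iff, and_imp]
  intro hi _
  have := (Nat.lt_two_pow_self (n := i)).trans_le (Nat.ge_two_pow_of_testBit hi)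
  omega

theorem runsOfOnes_eq_div_two_add (m : ℕ) :
    runsOfOnes m = runsOfOnes (m / 2) + if m.testBit 0 ∧ ¬ m.testBit 1 then 1 else 0 := by
  rw [runsOfOnes_eq_card_range (N := m + 2) (by omega),
    runsOfOnes_eq_card_range (N := m + 1) (Nat.div_le_self m 2 |>.trans_lt (by omega)),
    card_filter, card_filter, sum_range_succ']
  simp only [← Nat.testBit_div_two]

theorem runsOfOnes_two_mul (n : ℕ) : runsOfOnes (2 * n) = runsOfOnes n := by
  rw [runsOfOnes_eq_div_two_add]
  simp [Nat.testBit_zero]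

theorem runsOfOnes_two_mul_add_one (n : ℕ) :
    runsOfOnes (2 * n + 1) = runsOfOnes n + if n % 2 = 0 then 1 else 0 := by
  rw [runsOfOnes_eq_div_two_add, ← Nat.testBit_div_two]
  simp [Nat.testBit_zero, Nat.mul_add_div]

theorem stmt1 (n : ℕ) :
    r (4 * n) = r n ∧ r (4 * n + 1) = 1 - r n ∧
    r (4 * n + 2) = r (2 * n + 1) ∧ r (4 * n + 3) = r (2 * n + 1) := by
  unfold r
  refine ⟨?_, ?_, ?_, ?_⟩
  · rw [show 4 * n = 2 * (2 * n) by ring, runsOfOnes_two_mul, runsOfOnes_two_mul]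
  · rw [show 4 * n + 1 = 2 * (2 * n) + 1 by ring, runsOfOnes_two_mul_add_one, runsOfOnes_two_mul]
    simp only [Nat.mul_mod_right, if_true]
    omega
  · rw [show 4 * n + 2 = 2 * (2 * n + 1) by ring, runsOfOnes_two_mul]
  · rw [show 4 * n + 3 = 2 * (2 * n + 1) + 1 by ring, runsOfOnes_two_mul_add_one]
    simp
end

section
/- Let r(n) denote the parity of the number of runs of 1's in the binary representation of n. Then for every k ≥ 1: if 0 ≤ n ≤ 2^(k-1) - 1 then r(n + 2^k) = 1 - r(n), and if 2^(k-1) ≤ n ≤ 2^k - 1 then r(n + 2^k) = r(n). -/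
open Finset

/-- `i` is the most significant position of a run of 1's in the binary digits of `n`. -/
def IsRunEnd (n i : ℕ) : Prop := n.testBit i ∧ ¬ n.testBit (i + 1)

instance (n i : ℕ) : Decidable (IsRunEnd n i) := inferInstanceAs (Decidable (_ ∧ _))

lemma IsRunEnd.two_pow_le {n i : ℕ} (h : IsRunEnd n i) : 2 ^ i ≤ n :=
  Nat.ge_two_pow_of_testBit h.1

lemma runsOfOnes_eq_card_filter_range {n N : ℕ} (hn : n < 2 ^ N) :
    runsOfOnes n = #{i ∈ range N | IsRunEnd n i} := by
  unfold runsOfOnes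
  congr 1
  ext i
  simp only [mem_filter, mem_range]
  refine ⟨fun ⟨_, h⟩ => ⟨?_, h⟩, fun ⟨_, h⟩ => ⟨?_, h⟩⟩
  · exact (Nat.pow_lt_pow_iff_right (by norm_num)).1 ((IsRunEnd.two_pow_le h).trans_lt hn)
  · have := Nat.lt_two_pow_self (n := i)
    have := IsRunEnd.two_pow_le h
    omega

lemma testBit_of_two_pow_le_of_lt {n k : ℕ} (h₁ : 2 ^ k ≤ n) (h₂ : n < 2 ^ (k + 1)) :
    n.testBit k = true := by
  obtain ⟨d, rfl⟩ := Nat.exists_eq_add_of_le h₁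
  rw [Nat.testBit_two_pow_add_eq, Nat.testBit_lt_two_pow (by omega), Bool.not_false]

/-- Prepending a 1 at position `k + 1` starts a new run, unless the top digit `k` of `n`
already ends a run, which the new digit then extends. -/
lemma runsOfOnes_two_pow_succ_add {n k : ℕ} (hn : n < 2 ^ (k + 1)) :
    runsOfOnes (2 ^ (k + 1) + n) + (if n.testBit k then 1 else 0) = runsOfOnes n + 1 := by
  have hm : 2 ^ (k + 1) + n < 2 ^ (k + 2) := by
    rw [pow_succ 2 (k + 1)]
    omega
  have hn' : n < 2 ^ (k + 2) := hn.trans_le (Nat.pow_le_pow_right (by norm_num) (by omega))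
  have hbit : ∀ j, k + 1 ≤ j → n.testBit j = false := fun j hj =>
    Nat.testBit_lt_two_pow (hn.trans_le (Nat.pow_le_pow_right (by norm_num) hj))
  have hlow : ∀ i < k, IsRunEnd (2 ^ (k + 1) + n) i ↔ IsRunEnd n i := fun i hi => by
    simp only [IsRunEnd, Nat.testBit_two_pow_add_gt (by omega : i < k + 1),
      Nat.testBit_two_pow_add_gt (by omega : i + 1 < k + 1)]
  rw [runsOfOnes_eq_card_filter_range hm, runsOfOnes_eq_card_filter_range hn', card_filter,
    card_filter, sum_range_succ, sum_range_succ, sum_range_succ (n := k + 1),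
    sum_range_succ (n := k), sum_congr rfl fun i hi => if_congr (hlow i (mem_range.1 hi)) rfl rfl]
  simp only [IsRunEnd, Nat.testBit_two_pow_add_gt (Nat.lt_succ_self k), Nat.testBit_two_pow_add_eq,
    Nat.testBit_lt_two_pow hm, hbit (k + 1) le_rfl, hbit (k + 2) (by omega)]
  cases n.testBit k <;> simp

lemma runsOfOnes_add_two_pow {n k : ℕ} (hn : n < 2 ^ k) :
    runsOfOnes (n + 2 ^ k) + (if n.testBit (k - 1) then 1 else 0) = runsOfOnes n + 1 := by
  rw [Nat.add_comm n]
  rcases k with _ | k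
  · obtain rfl : n = 0 := by omega
    decide
  · exact runsOfOnes_two_pow_succ_add hn

theorem stmt2_general (k : ℕ) (n : ℕ) :
    (n ≤ 2 ^ (k - 1) - 1 → r (n + 2 ^ k) = 1 - r n) ∧
    (2 ^ (k - 1) ≤ n → n ≤ 2 ^ k - 1 → r (n + 2 ^ k) = r n) := by
  have hpos := Nat.two_pow_pos (k - 1)
  have hle : 2 ^ (k - 1) ≤ 2 ^ k := Nat.pow_le_pow_right (by norm_num) (by omega)
  constructor
  · intro h
    have hruns := runsOfOnes_add_two_pow (n := n) (k := k) (by omega)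
    rw [Nat.testBit_lt_two_pow (by omega), if_neg Bool.false_ne_true] at hruns
    unfold r
    omega
  · intro h₁ h₂
    rcases k with _ | k
    · simp at h₁ h₂
      omega
    rw [Nat.add_sub_cancel] at h₁
    have hruns := runsOfOnes_add_two_pow (n := n) (k := k + 1) (by omega)
    rw [Nat.add_sub_cancel, testBit_of_two_pow_le_of_lt h₁ (by omega), if_pos rfl] at hruns
    unfold r
    omega

theorem stmt2 (k : ℕ) (hk : 1 ≤ k) (n : ℕ) :
    (n ≤ 2 ^ (k - 1) - 1 → r (n + 2 ^ k) = 1 - r n) ∧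
    (2 ^ (k - 1) ≤ n → n ≤ 2 ^ k - 1 → r (n + 2 ^ k) = r n) :=
  stmt2_general k n
end

section
/- Let g(n) denote the parity of the number of 1's in the base (−2) (negabinary) representation of n. Then g(0) = 0, and for all n ≥ 0: g(4n) = g(n), g(4n+1) = 1 − g(n), g(4n+2) = 1 − g(n+1), and g(4n+3) = g(n+1). -/
lemma sum_step (m : ℤ) (h : m ≠ 0) :
    (negaDigits m).sum = (m % 2).toNat + (negaDigits ((m % 2 - m) / 2)).sum := by
  rw [negaDigits]; simp [h]

lemma sum_negTwo (k : ℤ) : (negaDigits (-(2 * k))).sum = (negaDigits k).sum := by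
  by_cases h : k = 0
  · simp [h]
  · rw [sum_step (-(2 * k)) (by omega)]
    have h1 : (-(2 * k)) % 2 = 0 := by omega
    have h2 : (0 - (-(2 * k))) / 2 = k := by omega
    rw [h1, h2]; simp

lemma sum_negOdd (k : ℤ) : (negaDigits (-(2 * k + 1))).sum = 1 + (negaDigits (k + 1)).sum := by
  rw [sum_step (-(2 * k + 1)) (by omega)]
  have h1 : (-(2 * k + 1)) % 2 = 1 := by omega
  have h2 : (1 - (-(2 * k + 1))) / 2 = k + 1 := by omega
  rw [h1, h2]; simp

lemma sum4 (k : ℤ) : (negaDigits (4 * k)).sum = (negaDigits k).sum := by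
  by_cases h : k = 0
  · simp [h]
  · rw [sum_step (4 * k) (by omega)]
    have h1 : (4 * k) % 2 = 0 := by omega
    have h2 : (0 - 4 * k) / 2 = -(2 * k) := by omega
    rw [h1, h2, sum_negTwo]; simp

lemma sum41 (k : ℤ) : (negaDigits (4 * k + 1)).sum = 1 + (negaDigits k).sum := by
  rw [sum_step (4 * k + 1) (by omega)]
  have h1 : (4 * k + 1) % 2 = 1 := by omega
  have h2 : (1 - (4 * k + 1)) / 2 = -(2 * k) := by omega
  rw [h1, h2, sum_negTwo]; simp

lemma sum42 (k : ℤ) : (negaDigits (4 * k + 2)).sum = 1 + (negaDigits (k + 1)).sum := by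
  rw [sum_step (4 * k + 2) (by omega)]
  have h1 : (4 * k + 2) % 2 = 0 := by omega
  have h2 : (0 - (4 * k + 2)) / 2 = -(2 * k + 1) := by omega
  rw [h1, h2, sum_negOdd]; simp

lemma sum43 (k : ℤ) : (negaDigits (4 * k + 3)).sum = 2 + (negaDigits (k + 1)).sum := by
  rw [sum_step (4 * k + 3) (by omega)]
  have h1 : (4 * k + 3) % 2 = 1 := by omega
  have h2 : (1 - (4 * k + 3)) / 2 = -(2 * k + 1) := by omega
  rw [h1, h2, sum_negOdd]; omega

theorem stmt3 :
    g 0 = 0 ∧ ∀ n : ℕ, g (4 * n) = g n ∧ g (4 * n + 1) = 1 - g n ∧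
      g (4 * n + 2) = 1 - g (n + 1) ∧ g (4 * n + 3) = g (n + 1) := by
  constructor
  · simp [g, negaDigits]
  · intro n
    have c0 : ((4 * n : ℕ) : ℤ) = 4 * (n : ℤ) := by push_cast; ring
    have c1 : ((4 * n + 1 : ℕ) : ℤ) = 4 * (n : ℤ) + 1 := by push_cast; ring
    have c2 : ((4 * n + 2 : ℕ) : ℤ) = 4 * (n : ℤ) + 2 := by push_cast; ring
    have c3 : ((4 * n + 3 : ℕ) : ℤ) = 4 * (n : ℤ) + 3 := by push_cast; ring
    have c4 : ((n + 1 : ℕ) : ℤ) = (n : ℤ) + 1 := by push_cast; ring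
    refine ⟨?_, ?_, ?_, ?_⟩ <;>
      simp only [g, c0, c1, c2, c3, c4, sum4, sum41, sum42, sum43] <;> omega
end

section
/- Let g(n) denote the parity of the number of 1's in the negabinary representation of n. Then g(2^m − 1) equals: 0 if m = 0; 1 if m = 1; 1 if m ≥ 2 is even; and 0 if m ≥ 3 is odd. -/
lemma nd0 : negaDigits 0 = [] := by rw [negaDigits]; simp
lemma nd1 : negaDigits 1 = [1] := by rw [negaDigits]; norm_num [nd0]
lemma ndm1 : negaDigits (-1) = [1, 1] := by rw [negaDigits]; norm_num [nd1]

lemma cd (j : ℕ) : (negaDigits (2^j)).sum % 2 = (j+1) % 2 ∧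
    (negaDigits (-(2^j))).sum % 2 = j % 2 := by
  induction j with
  | zero => norm_num [nd1, ndm1]
  | succ j ih =>
    have h2 : (2:ℤ)^(j+1) = 2 * 2^j := by ring
    have hp : (0:ℤ) < 2^j := by positivity
    have hm : (2:ℤ)^(j+1) % 2 = 0 := by rw [h2]; exact Int.mul_emod_right 2 _
    constructor
    · rw [negaDigits]
      rw [if_neg (by positivity), hm]
      have : (0 - (2:ℤ)^(j+1)) / 2 = -(2^j) := by omega
      rw [this]
      simp only [Int.toNat_zero, List.sum_cons, Nat.zero_add, ih.2]
      omega
    · rw [negaDigits]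
      rw [if_neg (by omega), show (-(2:ℤ)^(j+1)) % 2 = 0 by omega]
      have : ((0:ℤ) - -(2^(j+1))) / 2 = 2^j := by omega
      rw [this]
      simp only [Int.toNat_zero, List.sum_cons, Nat.zero_add, ih.1]

theorem stmt5 (m : ℕ) :
    g (2 ^ m - 1) = if m = 0 then 0 else if m = 1 then 1 else if Even m then 1 else 0 := by
  match m with
  | 0 => simp [g, nd0]
  | 1 => simp [g, nd1]
  | (k+2) =>
    have hc := (cd k).1
    have hcast : ((2 ^ (k+2) - 1 : ℕ) : ℤ) = 2^(k+2) - 1 := by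
      push_cast [Nat.one_le_two_pow]; ring
    have hp : (0:ℤ) < 2^k := by positivity
    have h2 : (2:ℤ)^(k+2) = 4 * 2^k := by ring
    unfold g
    rw [hcast, negaDigits]
    rw [if_neg (by omega), show ((2:ℤ)^(k+2) - 1) % 2 = 1 by omega,
      show ((1:ℤ) - (2^(k+2) - 1)) / 2 = 1 - 2 * 2^k by omega]
    rw [negaDigits]
    rw [if_neg (by omega), show ((1:ℤ) - 2 * 2^k) % 2 = 1 by omega,
      show ((1:ℤ) - (1 - 2 * 2^k)) / 2 = 2^k by omega]
    simp only [Int.toNat_one, List.sum_cons]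
    by_cases h : Even k
    · rw [if_neg (by omega), if_neg (by omega),
        if_pos (by simpa [Nat.even_add] using h)]
      have := Nat.even_iff.mp h; omega
    · rw [if_neg (by omega), if_neg (by omega),
        if_neg (by simpa [Nat.even_add] using h)]
      have := Nat.not_even_iff.mp h; omega
end

section
/- Let g(n) denote the parity of the number of 1's in the negabinary representation of n. For every even k ≥ 2 and every m with 2^(k−1) ≤ m < 2^k, we have g(2^k + m) = 1 − g(m). -/
def G (n : ℤ) : ℕ := (negaDigits n).sum % 2

lemma G_step (d : ℕ) (hd : d ≤ 1) (y : ℤ) : G ((d : ℤ) + (-2) * y) = (d + G y) % 2 := by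
  by_cases hx : (d : ℤ) + (-2) * y = 0
  · have hd0 : d = 0 ∧ y = 0 := by omega
    obtain ⟨rfl, rfl⟩ := hd0
    simp [G, negaDigits]
  · unfold G
    rw [negaDigits, if_neg hx]
    have hm : ((d : ℤ) + (-2) * y) % 2 = d := by omega
    rw [hm]
    have hy : ((d : ℤ) - ((d : ℤ) + (-2) * y)) / 2 = y := by omega
    rw [hy]
    simp [List.sum_cons, Nat.add_mod]

/-- (U j, L j): max/min integers representable with negabinary digits at positions < j. -/
def UL : ℕ → ℤ × ℤ
  | 0 => (0, 0)
  | j + 1 => (1 - 2 * (UL j).2, -2 * (UL j).1)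

lemma UL_spec (j : ℕ) :
    (if Even j then 3 * (UL j).1 = 2 ^ j - 1 ∧ 3 * (UL j).2 = 2 - 2 ^ (j + 1)
     else 3 * (UL j).1 = 2 ^ (j + 1) - 1 ∧ 3 * (UL j).2 = 2 - 2 ^ j) := by
  induction j with
  | zero => simp [UL]
  | succ j ih =>
    rw [UL]
    by_cases h : Even j
    · rw [if_pos h] at ih
      rw [if_neg (by simp [Nat.even_add_one, h])]
      have : (2 : ℤ) ^ (j + 2) = 2 * 2 ^ (j + 1) := by ring
      constructor <;> [skip; skip] <;> simp only [pow_succ] at * <;> omega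
    · rw [if_neg h] at ih
      rw [if_pos (by simp [Nat.even_add_one, h])]
      constructor <;> simp only [pow_succ] at * <;> omega

/-- Key lemma: adding (-2)^j flips the digit-sum parity when a is representable below j. -/
lemma G_flip (j : ℕ) : ∀ a : ℤ, (UL j).2 ≤ a → a ≤ (UL j).1 →
    G (a + (-2) ^ j) = (G a + 1) % 2 := by
  induction j with
  | zero =>
    intro a h1 h2
    have ha : a = 0 := by simp [UL] at h1 h2; omega
    subst ha
    simp [G, negaDigits]
  | succ j ih =>
    intro a h1 h2
    simp only [UL] at h1 h2
    set d : ℕ := (a % 2).toNat with hd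
    set b : ℤ := (a % 2 - a) / 2 with hb
    have hd1 : d ≤ 1 := by omega
    have hab : a = (d : ℤ) + (-2) * b := by omega
    have hb1 : (UL j).2 ≤ b := by omega
    have hb2 : b ≤ (UL j).1 := by omega
    have key : a + (-2) ^ (j + 1) = (d : ℤ) + (-2) * (b + (-2) ^ j) := by
      rw [hab]; ring
    rw [key, G_step d hd1, ih b hb1 hb2, hab, G_step d hd1]
    omega


theorem stmt8 (k : ℕ) (hk : 2 ≤ k) (hke : Even k) (m : ℕ)
    (h1 : 2 ^ (k - 1) ≤ m) (h2 : m < 2 ^ k) :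
    g (2 ^ k + m) = 1 - g m := by
  -- a = m - 2^k ∈ [-2^(k-1), 0)
  set a : ℤ := (m : ℤ) - 2 ^ k with ha
  -- power facts
  have p1 : (2 : ℤ) ^ k = 2 * 2 ^ (k - 1) := by
    rw [← pow_succ']; congr 1; omega
  have p2 : (2 : ℤ) ^ (k + 1) = 2 * 2 ^ k := by ring
  have p3 : (2 : ℤ) ^ (k + 2) = 4 * 2 ^ k := by ring
  have p4 : (2 : ℤ) ^ (k + 3) = 8 * 2 ^ k := by ring
  have p5 : (2 : ℤ) ≤ 2 ^ (k - 1) := by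
    calc (2 : ℤ) = 2 ^ 1 := by norm_num
    _ ≤ 2 ^ (k - 1) := pow_le_pow_right₀ (by norm_num) (by omega)
  have hm1 : (2 : ℤ) ^ (k - 1) ≤ (m : ℤ) := by exact_mod_cast h1
  have hm2 : (m : ℤ) < 2 ^ k := by exact_mod_cast h2
  -- sign facts for (-2)^j
  have e1 : (-2 : ℤ) ^ k = 2 ^ k := hke.neg_pow 2
  have e2 : (-2 : ℤ) ^ (k + 1) = -(2 ^ (k + 1)) := by
    have : Odd (k + 1) := Even.add_one hke
    exact this.neg_pow 2
  have e3 : (-2 : ℤ) ^ (k + 2) = 2 ^ (k + 2) := by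
    have : Even (k + 2) := by exact hke.add (by norm_num)
    exact this.neg_pow 2
  -- UL bounds
  have s0 := UL_spec k
  rw [if_pos hke] at s0
  have s1 := UL_spec (k + 1)
  rw [if_neg (by simp [Nat.even_add_one, hke])] at s1
  have s2 := UL_spec (k + 2)
  rw [if_pos (by exact hke.add (by norm_num))] at s2
  have q1 : (2 : ℤ) ^ (k + 1 + 1) = 4 * 2 ^ k := by ring
  have q2 : (2 : ℤ) ^ (k + 2 + 1) = 8 * 2 ^ k := by ring
  -- apply the flip lemma three times
  have f0 : G (a + (-2) ^ k) = (G a + 1) % 2 := by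
    apply G_flip k a <;> simp only [pow_succ] at s0 <;> omega
  have f1 : G (a + (-2) ^ (k + 1)) = (G a + 1) % 2 := by
    apply G_flip (k + 1) a <;> omega
  have f2 : G ((a + (-2) ^ (k + 1)) + (-2) ^ (k + 2)) = (G (a + (-2) ^ (k + 1)) + 1) % 2 := by
    apply G_flip (k + 2) (a + (-2) ^ (k + 1)) <;> rw [e2] <;> omega
  -- translate g to G
  have gm : g m = (G a + 1) % 2 := by
    have : ((m : ℕ) : ℤ) = a + (-2) ^ k := by rw [e1]; omega
    show G ((m : ℕ) : ℤ) = _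
    rw [this, f0]
  have gbig : g (2 ^ k + m) = ((G a + 1) % 2 + 1) % 2 := by
    have : ((2 ^ k + m : ℕ) : ℤ) = (a + (-2) ^ (k + 1)) + (-2) ^ (k + 2) := by
      push_cast; rw [e2, e3]; omega
    show G ((2 ^ k + m : ℕ) : ℤ) = _
    rw [this, f2, f1]
  omega
end

section
/- Let g(n) denote the parity of the number of 1's in the negabinary representation of n. The sequence (g(n))_{n≥0} is cube-free: there do not exist integers i ≥ 0 and s ≥ 1 such that g(i + j) = g(i + s + j) = g(i + 2s + j) for all 0 ≤ j < s. -/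
def S (m : ℤ) : ℕ := (negaDigits m).sum % 2

lemma S_even (m : ℤ) : S (2*m) = S (-m) := by
  unfold S
  by_cases h : m = 0
  · subst h; norm_num
  · rw [negaDigits]
    have h2 : (2*m) % 2 = 0 := by omega
    have h3 : (0 - 2*m) / 2 = -m := by omega
    rw [if_neg (by omega), h2, h3]
    simp

lemma S_odd (m : ℤ) : S (2*m+1) = (S (-m) + 1) % 2 := by
  unfold S
  rw [negaDigits]
  have h2 : (2*m+1) % 2 = 1 := by omega
  have h3 : (1 - (2*m+1)) / 2 = -m := by omega
  rw [if_neg (by omega), h2, h3]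
  simp [Nat.add_mod, Nat.add_comm]

def v (n : ℕ) : ℕ := S (-(n:ℤ))

lemma g_eq_S (n : ℕ) : g n = S n := rfl

lemma S_lt (m : ℤ) : S m < 2 := Nat.mod_lt _ (by norm_num)

lemma g_lt (n : ℕ) : g n < 2 := S_lt n

lemma v_lt (n : ℕ) : v n < 2 := S_lt _

lemma gA (n : ℕ) : g (2*n) = v n := by
  rw [g_eq_S, v]
  have : ((2*n : ℕ) : ℤ) = 2*(n:ℤ) := by push_cast; ring
  rw [this, S_even]

lemma vC (n : ℕ) : v (2*n) = g n := by
  rw [g_eq_S, v]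
  have : (-((2*n : ℕ) : ℤ)) = 2*(-(n:ℤ)) := by push_cast; ring
  rw [this, S_even, neg_neg]

lemma sumG (n : ℕ) : g (2*n) + g (2*n+1) = 1 := by
  have h1 := gA n
  have h2 : g (2*n+1) = (v n + 1) % 2 := by
    rw [g_eq_S, v]
    have : ((2*n+1 : ℕ) : ℤ) = 2*(n:ℤ)+1 := by push_cast; ring
    rw [this, S_odd]
  have := v_lt n
  omega

lemma sumV (n : ℕ) : v (2*n+1) + v (2*n+2) = 1 := by
  have h1 : v (2*n+1) = (g (n+1) + 1) % 2 := by
    rw [g_eq_S, v]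
    have : (-((2*n+1 : ℕ) : ℤ)) = 2*(-((n:ℤ)+1))+1 := by push_cast; ring
    rw [this, S_odd]
    have : (-(-((n:ℤ)+1))) = ((n+1 : ℕ) : ℤ) := by push_cast; ring
    rw [this]
  have h2 : v (2*n+2) = g (n+1) := by
    have : 2*n+2 = 2*(n+1) := by ring
    rw [this, vC]
  have := g_lt (n+1)
  omega

lemma no_gpair (n : ℕ) (h1 : g n = g (n+1)) (h2 : g (n+1) = g (n+2)) : False := by
  rcases Nat.even_or_odd n with ⟨a, ha⟩ | ⟨a, ha⟩
  · have e : n = 2*a := by omega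
    subst e
    have := sumG a
    omega
  · have e : n = 2*a+1 := by omega
    subst e
    have := sumG (a+1)
    have e1 : 2*a+1+1 = 2*(a+1) := by ring
    have e2 : 2*a+1+2 = 2*(a+1)+1 := by ring
    rw [e1, e2] at h2
    omega

lemma no_vpair (n : ℕ) (h1 : v n = v (n+1)) (h2 : v (n+1) = v (n+2)) : False := by
  rcases Nat.even_or_odd n with ⟨a, ha⟩ | ⟨a, ha⟩
  · have e : n = 2*a := by omega
    subst e
    have := sumV a
    have e1 : 2*a+1+1 = 2*a+2 := by ring
    rw [e1] at h2
    omega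
  · have e : n = 2*a+1 := by omega
    subst e
    have := sumV a
    have e1 : 2*a+1+1 = 2*a+2 := by ring
    rw [e1] at h1
    omega

lemma main (s : ℕ) (hs : 1 ≤ s) :
    (∀ i, ¬ ∀ k, k < 2*s → g (i+k) = g (i+k+s)) ∧
    (∀ m, ¬ ∀ k, k < 2*s → v (m+k) = v (m+k+s)) := by
  induction s using Nat.strong_induction_on with
  | _ s IH =>
  constructor
  · intro i H
    rcases Nat.even_or_odd s with ⟨t, ht⟩ | ⟨d, hd⟩
    · -- s = 2*t, reduce to cube in v of period t
      have ht' : s = 2*t := by omega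
      have ht1 : 1 ≤ t := by omega
      refine (IH t (by omega) ht1).2 ((i+1)/2) ?_
      intro k hk
      set m0 := (i+1)/2 with hm0
      have hp1 : i ≤ 2*(m0+k) := by omega
      have hp2 : 2*(m0+k) - i < 2*s := by omega
      have := H (2*(m0+k) - i) hp2
      have e1 : i + (2*(m0+k) - i) = 2*(m0+k) := by omega
      have e2 : 2*(m0+k) + s = 2*(m0+k+t) := by omega
      rw [e1] at this
      rw [e2, gA, gA] at this
      exact this
    · -- s = 2*d+1 odd
      have hd' : s = 2*d+1 := by omega
      subst hd'
      rcases Nat.eq_zero_or_pos d with rfl | hd1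
      · -- s = 1
        have h0 := H 0 (by omega)
        have h1 := H 1 (by omega)
        rw [show i+0+(2*0+1) = i+1 by ring, show i+0 = i by ring] at h0
        rw [show i+1+(2*0+1) = i+2 by ring] at h1
        exact no_gpair i h0 h1
      · -- d ≥ 1
        set n := (i+1)/2 with hn
        have claim : ∀ n', i ≤ 2*n' → 2*n'+1 < i + 2*(2*d+1) →
            v (n'+d) = v (n'+d+1) := by
          intro n' hlo hhi
          have H1 := H (2*n' - i) (by omega)
          have H2 := H (2*n'+1 - i) (by omega)
          have e1 : i + (2*n' - i) = 2*n' := by omega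
          have e2 : 2*n' + (2*d+1) = 2*(n'+d)+1 := by omega
          have e3 : i + (2*n'+1 - i) = 2*n'+1 := by omega
          have e4 : 2*n'+1 + (2*d+1) = 2*(n'+d+1) := by omega
          rw [e1] at H1; rw [e2] at H1
          rw [e3] at H2; rw [e4] at H2
          have s1 := sumG n'
          have s2 := sumG (n'+d)
          have a1 := gA n'
          have a2 := gA (n'+d)
          have a3 := gA (n'+d+1)
          have := v_lt n'
          have := v_lt (n'+d)
          have := v_lt (n'+d+1)
          omega
        have c1 := claim n (by omega) (by omega)
        have c2 := claim (n+1) (by omega) (by omega)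
        rw [show n+1+d = n+d+1 by ring, show n+d+1+1 = n+d+2 by ring] at c2
        exact no_vpair (n+d) c1 c2
  · intro m H
    rcases Nat.even_or_odd s with ⟨t, ht⟩ | ⟨d, hd⟩
    · have ht' : s = 2*t := by omega
      have ht1 : 1 ≤ t := by omega
      refine (IH t (by omega) ht1).1 ((m+1)/2) ?_
      intro k hk
      set n0 := (m+1)/2 with hn0
      have hp1 : m ≤ 2*(n0+k) := by omega
      have hp2 : 2*(n0+k) - m < 2*s := by omega
      have := H (2*(n0+k) - m) hp2
      have e1 : m + (2*(n0+k) - m) = 2*(n0+k) := by omega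
      have e2 : 2*(n0+k) + s = 2*(n0+k+t) := by omega
      rw [e1] at this
      rw [e2, vC, vC] at this
      exact this
    · have hd' : s = 2*d+1 := by omega
      subst hd'
      rcases Nat.eq_zero_or_pos d with rfl | hd1
      · have h0 := H 0 (by omega)
        have h1 := H 1 (by omega)
        rw [show m+0+(2*0+1) = m+1 by ring, show m+0 = m by ring] at h0
        rw [show m+1+(2*0+1) = m+2 by ring] at h1
        exact no_vpair m h0 h1
      · set n := m/2 with hn
        have claim : ∀ n', m ≤ 2*n'+1 → 2*n'+2 < m + 2*(2*d+1) →
            g (n'+d+1) = g (n'+d+2) := by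
          intro n' hlo hhi
          have H1 := H (2*n'+1 - m) (by omega)
          have H2 := H (2*n'+2 - m) (by omega)
          have e1 : m + (2*n'+1 - m) = 2*n'+1 := by omega
          have e2 : 2*n'+1 + (2*d+1) = 2*(n'+d+1) := by omega
          have e3 : m + (2*n'+2 - m) = 2*n'+2 := by omega
          have e4 : 2*n'+2 + (2*d+1) = 2*(n'+d+1)+1 := by omega
          rw [e1] at H1; rw [e2] at H1
          rw [e3] at H2; rw [e4] at H2
          have s1 := sumV n'
          have s2 := sumV (n'+d+1)
          have c1 := vC (n'+d+1)
          have c2 : v (2*(n'+d+1)+2) = g (n'+d+2) := by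
            have e : 2*(n'+d+1)+2 = 2*(n'+d+2) := by ring
            rw [e, vC]
          have c3 : v (2*n'+2) = g (n'+1) := by
            have e : 2*n'+2 = 2*(n'+1) := by ring
            rw [e, vC]
          have := g_lt (n'+1)
          have := g_lt (n'+d+1)
          have := g_lt (n'+d+2)
          omega
        have c1 := claim n (by omega) (by omega)
        have c2 := claim (n+1) (by omega) (by omega)
        rw [show n+1+d+1 = n+d+1+1 by ring, show n+1+d+2 = n+d+1+2 by ring] at c2
        rw [show n+d+2 = n+d+1+1 by ring] at c1
        exact no_gpair (n+d+1) c1 c2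

theorem stmt10 :
    ¬ ∃ (i s : ℕ), 1 ≤ s ∧ ∀ j < s,
      g (i + j) = g (i + s + j) ∧ g (i + s + j) = g (i + 2 * s + j) := by
  rintro ⟨i, s, hs, h⟩
  refine (main s hs).1 i ?_
  intro k hk
  by_cases hks : k < s
  · have := (h k hks).1
    have e : i + s + k = i + k + s := by ring
    rw [e] at this
    exact this
  · have hj : k - s < s := by omega
    have h1 := (h (k-s) hj).2
    have e1 : i + s + (k - s) = i + k := by omega
    have e2 : i + 2*s + (k - s) = i + k + s := by omega
    rw [e1, e2] at h1
    exact h1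
end

section
/- Let g(n) denote the parity of the number of 1's in the negabinary representation of n. Then there is no n with g(n) = g(n+1) = g(n+2), i.e., the sequence G contains no three consecutive equal terms. -/
/-!
Since `2m = 0 + (-2)(-m)` and `2m + 1 = 1 + (-2)(-m)`, the negabinary expansions of `2m` and
`2m + 1` differ only in the lowest digit, so `g` takes different values on them; every window
`n, n + 1, n + 2` contains such a pair.
-/

theorem negaDigits_two_mul_add_one (m : ℤ) : negaDigits (2 * m + 1) = 1 :: negaDigits (-m) := by
  rw [negaDigits, if_neg (by omega)]
  congr 2 <;> omega

theorem negaDigits_two_mul {m : ℤ} (hm : m ≠ 0) : negaDigits (2 * m) = 0 :: negaDigits (-m) := by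
  rw [negaDigits, if_neg (by omega)]
  congr 2 <;> omega

theorem sum_negaDigits_two_mul (m : ℤ) : (negaDigits (2 * m)).sum = (negaDigits (-m)).sum := by
  rcases eq_or_ne m 0 with rfl | hm
  · simp
  · simp [negaDigits_two_mul hm]

theorem g_two_mul_ne_g_two_mul_add_one (m : ℕ) : g (2 * m) ≠ g (2 * m + 1) := by
  unfold g
  push_cast
  rw [sum_negaDigits_two_mul, negaDigits_two_mul_add_one, List.sum_cons]
  omega

theorem stmt11 : ¬ ∃ n : ℕ, g n = g (n + 1) ∧ g (n + 1) = g (n + 2) := by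
  rintro ⟨n, h₀₁, h₁₂⟩
  obtain ⟨m, rfl | rfl⟩ := Nat.even_or_odd' n
  · exact g_two_mul_ne_g_two_mul_add_one m h₀₁
  · exact g_two_mul_ne_g_two_mul_add_one (m + 1) h₁₂
end

section
/- Let g(n) denote the parity of the number of 1's in the negabinary representation of n. The real number 0.G = Σ_{n≥1} g(n) · 2^{−(n+1)} (the binary number whose digits after the point are g(0), g(1), g(2), …) is irrational. -/
open Filter

section BinaryExpansion

variable {d : ℕ → ℕ}

lemma summable_half_pow_succ : Summable fun n : ℕ => (1 / 2 : ℝ) ^ (n + 1) :=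
  (summable_nat_add_iff 1).2 summable_geometric_two

lemma tsum_half_pow_succ : ∑' n : ℕ, (1 / 2 : ℝ) ^ (n + 1) = 1 := by
  simp only [pow_succ, tsum_mul_right, tsum_geometric_two]
  norm_num

lemma div_two_pow_le_half_pow {a : ℕ} (ha : a ≤ 1) (n : ℕ) :
    (a : ℝ) / 2 ^ (n + 1) ≤ (1 / 2) ^ (n + 1) := by
  rw [one_div_pow]
  gcongr
  exact_mod_cast ha

lemma summable_binary (hd : ∀ n, d n ≤ 1) : Summable fun n => (d n : ℝ) / 2 ^ (n + 1) :=
  summable_half_pow_succ.of_nonneg_of_le (fun _ => by positivity)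
    (fun n => div_two_pow_le_half_pow (hd n) n)

noncomputable def binaryTail (d : ℕ → ℕ) (k : ℕ) : ℝ := ∑' n, (d (n + k) : ℝ) / 2 ^ (n + 1)

lemma binaryTail_nonneg (k : ℕ) : 0 ≤ binaryTail d k :=
  tsum_nonneg fun _ => by positivity

lemma binaryTail_eq (hd : ∀ n, d n ≤ 1) (k : ℕ) :
    binaryTail d k = (d k + binaryTail d (k + 1)) / 2 := by
  rw [binaryTail, (summable_binary fun n => hd (n + k)).tsum_eq_zero_add, binaryTail]
  have h : ∀ n : ℕ,
      (d (n + 1 + k) : ℝ) / 2 ^ (n + 1 + 1) = (d (n + (k + 1)) : ℝ) / 2 ^ (n + 1) / 2 :=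
    fun n => by rw [add_right_comm n 1 k, add_assoc n k 1, pow_succ, div_div]
  rw [tsum_congr h, tsum_div_const]
  simp only [zero_add, pow_one]
  ring

lemma binaryTail_lt_one (hd : ∀ n, d n ≤ 1) {k : ℕ} (hz : ∃ n, d (n + k) = 0) :
    binaryTail d k < 1 := by
  obtain ⟨i, hi⟩ := hz
  rw [← tsum_half_pow_succ]
  refine (summable_binary fun n => hd (n + k)).tsum_lt_tsum (i := i)
    (fun n => div_two_pow_le_half_pow (hd _) n) ?_ summable_half_pow_succ
  rw [hi, Nat.cast_zero, zero_div]
  positivity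

lemma exists_int_two_pow_mul_binaryTail (hd : ∀ n, d n ≤ 1) (k : ℕ) :
    ∃ m : ℤ, 2 ^ k * binaryTail d 0 = m + binaryTail d k := by
  induction k with
  | zero => exact ⟨0, by simp⟩
  | succ k ih =>
    obtain ⟨m, hm⟩ := ih
    refine ⟨2 * m + d k, ?_⟩
    rw [pow_succ, mul_comm _ (2 : ℝ), mul_assoc, hm, binaryTail_eq hd k]
    push_cast
    ring

lemma eq_and_binaryTail_succ_eq (hd : ∀ n, d n ≤ 1) (hlt : ∀ k, binaryTail d k < 1) {a b : ℕ}
    (h : binaryTail d a = binaryTail d b) :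
    d a = d b ∧ binaryTail d (a + 1) = binaryTail d (b + 1) := by
  have key : (d a : ℝ) + binaryTail d (a + 1) = d b + binaryTail d (b + 1) := by
    linarith [binaryTail_eq hd a, binaryTail_eq hd b]
  have hab : d a = d b := by
    have ha := hd a; have hb := hd b
    have := binaryTail_nonneg (d := d) (a + 1); have := binaryTail_nonneg (d := d) (b + 1)
    have := hlt (a + 1); have := hlt (b + 1)
    interval_cases h₁ : d a <;> interval_cases h₂ : d b <;> norm_num at key ⊢ <;> linarith
  refine ⟨hab, ?_⟩
  rw [hab] at key
  linarith

lemma eq_of_binaryTail_eq (hd : ∀ n, d n ≤ 1) (hlt : ∀ k, binaryTail d k < 1) {a b : ℕ}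
    (h : binaryTail d a = binaryTail d b) (j : ℕ) : d (a + j) = d (b + j) := by
  suffices ∀ j, binaryTail d (a + j) = binaryTail d (b + j) from
    (eq_and_binaryTail_succ_eq hd hlt (this j)).1
  intro j
  induction j with
  | zero => exact h
  | succ j ih => exact (eq_and_binaryTail_succ_eq hd hlt ih).2

lemma binaryTail_mem_image (hd : ∀ n, d n ≤ 1) (hlt : ∀ k, binaryTail d k < 1) {q : ℚ}
    (hq : binaryTail d 0 = q) (k : ℕ) :
    binaryTail d k ∈ (fun i : ℤ => (i : ℝ) / q.den) '' Set.Ico 0 q.den := by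
  obtain ⟨m, hm⟩ := exists_int_two_pow_mul_binaryTail hd k
  have hden : (0 : ℝ) < q.den := by exact_mod_cast q.pos
  have hval : binaryTail d k = ((2 ^ k * q.num - m * q.den : ℤ) : ℝ) / q.den := by
    rw [eq_div_iff hden.ne', ← sub_eq_of_eq_add' hm, hq, Rat.cast_def]
    push_cast
    field_simp
  refine ⟨_, ⟨?_, ?_⟩, hval.symm⟩
  · have := binaryTail_nonneg (d := d) k
    rw [hval, le_div_iff₀ hden, zero_mul] at this
    exact_mod_cast this
  · have := hlt k
    rw [hval, div_lt_one hden] at this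
    exact_mod_cast this

theorem eventually_periodic_of_not_irrational_binary (hd : ∀ n, d n ≤ 1)
    (h : ¬ Irrational (∑' n, (d n : ℝ) / 2 ^ (n + 1))) :
    ∃ p > 0, ∀ᶠ n in atTop, d (n + p) = d n := by
  by_cases hz : ∀ k, ∃ n, d (n + k) = 0
  · have hlt k : binaryTail d k < 1 := binaryTail_lt_one hd (hz k)
    obtain ⟨q, hq⟩ : ∃ q : ℚ, binaryTail d 0 = q := by
      simpa [Irrational, binaryTail, eq_comm] using h
    obtain ⟨a, b, hab, heq⟩ := Set.Finite.exists_lt_map_eq_of_forall_mem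
      (binaryTail_mem_image hd hlt hq) ((Set.finite_Ico _ _).image _)
    refine ⟨b - a, by omega, eventually_atTop.2 ⟨a, fun n hn => ?_⟩⟩
    obtain ⟨j, rfl⟩ := Nat.exists_eq_add_of_le hn
    rw [show a + j + (b - a) = b + j by omega]
    exact (eq_of_binaryTail_eq hd hlt heq j).symm
  · push Not at hz
    obtain ⟨k, hk⟩ := hz
    have hone n : d (n + k) = 1 := by have := hd (n + k); have := hk n; omega
    refine ⟨1, one_pos, eventually_atTop.2 ⟨k, fun n hn => ?_⟩⟩
    obtain ⟨i, rfl⟩ := Nat.exists_eq_add_of_le' hn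
    rw [add_right_comm, hone, hone]

end BinaryExpansion

lemma tendsto_mul_add_atTop {a : ℕ} (ha : 0 < a) (b : ℕ) :
    Tendsto (fun k => a * k + b) atTop atTop :=
  tendsto_atTop_mono (fun k => by dsimp only [id]; nlinarith) tendsto_id

section Recurrence

variable {f : ℕ → ZMod 2}

lemma eventually_forall_add_mul {p : ℕ} (h : ∀ᶠ n in atTop, f (n + p) = f n) :
    ∀ᶠ n in atTop, ∀ m, f (n + m * p) = f n := by
  obtain ⟨N, hN⟩ := eventually_atTop.1 h
  refine eventually_atTop.2 ⟨N, fun n hn m => ?_⟩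
  induction m with
  | zero => simp
  | succ m ih => rw [add_one_mul, ← add_assoc, hN _ (by omega), ih]

lemma eventually_periodic_of_antiperiodic {q : ℕ} (h : ∀ᶠ n in atTop, f (n + q) = f n + 1) :
    ∀ᶠ n in atTop, f (n + 2 * q) = f n := by
  obtain ⟨N, hN⟩ := eventually_atTop.1 h
  refine eventually_atTop.2 ⟨N, fun n hn => ?_⟩
  rw [two_mul, ← add_assoc, hN _ (by omega), hN n hn, add_assoc, CharTwo.add_self_eq_zero,
    add_zero]

lemma eventually_periodic_of_four_mul (hfour : ∀ k, f (4 * k) = f k) {p : ℕ}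
    (h : ∀ᶠ n in atTop, f (n + 4 * p) = f n) : ∀ᶠ k in atTop, f (k + p) = f k := by
  filter_upwards [(tendsto_mul_add_atTop (by norm_num : 0 < 4) 0).eventually h] with k hk
  rwa [add_zero, ← mul_add, hfour, hfour] at hk

lemma eventually_antiperiodic_of_four_mul_add_two (hfour : ∀ k, f (4 * k) = f k)
    (htwo : ∀ k, f (4 * k + 2) = f (k + 1) + 1) {m : ℕ}
    (h : ∀ᶠ n in atTop, f (n + (4 * m + 2)) = f n) : ∀ᶠ k in atTop, f (k + (m + 1)) = f k + 1 := by
  filter_upwards [(tendsto_mul_add_atTop (by norm_num : 0 < 4) 0).eventually h] with k hk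
  rw [add_zero, ← add_assoc, ← mul_add, htwo, hfour, add_assoc] at hk
  rw [← hk, add_assoc, CharTwo.add_self_eq_zero, add_zero]

lemma not_eventually_antiperiodic_one (hfour : ∀ k, f (4 * k) = f k) :
    ¬ ∀ᶠ n in atTop, f (n + 1) = f n + 1 := by
  intro h
  have h4 : ∀ᶠ n in atTop, f (n + 4 * 1) = f n := by
    filter_upwards [eventually_forall_add_mul (eventually_periodic_of_antiperiodic h)] with n hn
    exact hn 2
  obtain ⟨n, hper, hanti⟩ := ((eventually_periodic_of_four_mul hfour h4).and h).exists
  rw [hper] at hanti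
  simp at hanti

lemma not_eventually_periodic_odd (hodd : ∀ m, f (2 * m + 1) = f (2 * m) + 1)
    (htwo : ∀ k, f (4 * k + 2) = f (k + 1) + 1) (q : ℕ) :
    ¬ ∀ᶠ n in atTop, f (n + (2 * q + 1)) = f n := by
  intro h
  have heven : ∀ᶠ j in atTop, f (2 * (j + 1)) = f (2 * j) := by
    filter_upwards [(tendsto_mul_add_atTop two_pos 1).eventually h,
      (tendsto_mul_add_atTop two_pos 2).eventually h] with j h₁ h₂
    rw [show 2 * j + 1 + (2 * q + 1) = 2 * (j + q + 1) by ring, hodd] at h₁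
    rw [show 2 * j + 2 + (2 * q + 1) = 2 * (j + q + 1) + 1 by ring, hodd, h₁, add_assoc,
      CharTwo.add_self_eq_zero, add_zero] at h₂
    rw [mul_add_one]
    exact h₂.symm
  obtain ⟨j, hj⟩ := (eventually_forall_add_mul (f := fun j => f (2 * j)) heven).exists
  have h₁ := hj (3 * j + 3)
  have h₂ := hj 1
  rw [show 2 * (j + (3 * j + 3) * 1) = 4 * (2 * j + 1) + 2 by ring, htwo,
    show 2 * j + 1 + 1 = 2 * (j + 1 * 1) by ring, h₂] at h₁
  simp at h₁

theorem not_eventually_periodic (hodd : ∀ m, f (2 * m + 1) = f (2 * m) + 1)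
    (hfour : ∀ k, f (4 * k) = f k) (htwo : ∀ k, f (4 * k + 2) = f (k + 1) + 1) {p : ℕ}
    (hp : 0 < p) : ¬ ∀ᶠ n in atTop, f (n + p) = f n := by
  induction p using Nat.strong_induction_on with
  | _ p ih =>
    intro h
    obtain ⟨q, rfl | rfl⟩ := Nat.even_or_odd' p
    · obtain ⟨m, rfl | rfl⟩ := Nat.even_or_odd' q
      · rw [← mul_assoc] at h
        exact ih m (by omega) (by omega) (eventually_periodic_of_four_mul hfour h)
      · rw [mul_add_one, ← mul_assoc] at h
        have hanti := eventually_antiperiodic_of_four_mul_add_two hfour htwo h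
        rcases m with _ | m
        · exact not_eventually_antiperiodic_one hfour hanti
        · exact ih _ (by omega) (by omega) (eventually_periodic_of_antiperiodic hanti)
    · exact not_eventually_periodic_odd hodd htwo q h

end Recurrence

lemma negaDigits_of_ne_zero {n : ℤ} (h : n ≠ 0) :
    negaDigits n = (n % 2).toNat :: negaDigits ((n % 2 - n) / 2) := by
  rw [negaDigits, if_neg h]

noncomputable def negaParity (n : ℤ) : ZMod 2 := ((negaDigits n).sum : ℕ)

lemma negaParity_two_mul (m : ℤ) : negaParity (2 * m) = negaParity (-m) := by
  rcases eq_or_ne m 0 with rfl | hm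
  · rfl
  · rw [negaParity, negaDigits_of_ne_zero (by omega), show 2 * m % 2 = 0 by omega,
      show (0 - 2 * m) / 2 = -m by omega]
    simp [negaParity]

lemma negaParity_two_mul_add_one (m : ℤ) : negaParity (2 * m + 1) = negaParity (-m) + 1 := by
  rw [negaParity, negaDigits_of_ne_zero (by omega), show (2 * m + 1) % 2 = 1 by omega,
    show (1 - (2 * m + 1)) / 2 = -m by omega]
  simp [negaParity, add_comm]

lemma negaParity_two_mul_add_one' (m : ℤ) :
    negaParity (2 * m + 1) = negaParity (2 * m) + 1 := by
  rw [negaParity_two_mul_add_one, negaParity_two_mul]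

lemma negaParity_four_mul (k : ℤ) : negaParity (4 * k) = negaParity k := by
  rw [show 4 * k = 2 * (2 * k) by ring, negaParity_two_mul, neg_mul_eq_mul_neg,
    negaParity_two_mul, neg_neg]

lemma negaParity_four_mul_add_two (k : ℤ) :
    negaParity (4 * k + 2) = negaParity (k + 1) + 1 := by
  rw [show 4 * k + 2 = 2 * (2 * k + 1) by ring, negaParity_two_mul,
    show -(2 * k + 1) = 2 * -(k + 1) + 1 by ring, negaParity_two_mul_add_one, neg_neg]

lemma g_le_one (n : ℕ) : g n ≤ 1 := Nat.le_of_lt_succ (Nat.mod_lt _ two_pos)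

lemma g_eq_val_negaParity (n : ℕ) : g n = (negaParity n).val := by
  rw [negaParity, ZMod.val_natCast, g]

theorem stmt14 : Irrational (∑' n : ℕ, (g n : ℝ) / 2 ^ (n + 1)) := by
  by_contra h
  obtain ⟨p, hp, hper⟩ := eventually_periodic_of_not_irrational_binary g_le_one h
  refine not_eventually_periodic (f := fun n : ℕ => negaParity n)
    (fun m => by exact_mod_cast negaParity_two_mul_add_one' m)
    (fun k => by exact_mod_cast negaParity_four_mul k)
    (fun k => by exact_mod_cast negaParity_four_mul_add_two k) hp ?_
  filter_upwards [hper] with n hn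
  rw [g_eq_val_negaParity, g_eq_val_negaParity] at hn
  exact ZMod.val_injective _ hn
end

section
/- For odd m ≥ 3 and k ≥ 0, the negabinary representation of 2^(m+k+1) − 2^m − 1 has digit 1 exactly at positions {0, 1, m, m+k+1} when k is even, and exactly at positions {0, 1, m, m+k+1, m+k+2} when k is odd. -/
/-!
Digits can be peeled off one at a time: if `n = ∑ j ∈ S, (-2) ^ j`, then `n % 2` records
whether `0 ∈ S`, and the recursion in `negaDigits` passes to the sum over `{j | j + 1 ∈ S}`.
So every finite set `S` is the digit set of `∑ j ∈ S, (-2) ^ j`, and it remains to write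
`2 ^ (m + k + 1) - 2 ^ m - 1` as `1 - 2 - 2 ^ m + 2 ^ (m + k + 1)` when `m + k + 1` is even,
and as `1 - 2 - 2 ^ m - 2 ^ (m + k + 1) + 2 ^ (m + k + 2)` when it is odd.
-/

theorem Finset.sum_eq_ite_zero_add_sum_preimage_succ {M : Type*} [AddCommMonoid M]
    (S : Finset ℕ) (f : ℕ → M) :
    ∑ j ∈ S, f j =
      (if 0 ∈ S then f 0 else 0) +
        ∑ j ∈ S.preimage Nat.succ Nat.succ_injective.injOn, f (j + 1) := by
  rw [← Finset.sum_ite_eq' S 0 f, ← Finset.sum_filter_add_sum_filter_not S (· = 0)]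
  congr 1
  · rw [Finset.sum_filter]
  · rw [Finset.sum_filter, ← Finset.sum_preimage Nat.succ S Nat.succ_injective.injOn]
    · simp
    · intro j _ hj
      simp_all

theorem sum_neg_two_pow_eq_ite_sub_two_mul (S : Finset ℕ) :
    ∑ j ∈ S, (-2 : ℤ) ^ j =
      (if 0 ∈ S then 1 else 0) -
        2 * ∑ j ∈ S.preimage Nat.succ Nat.succ_injective.injOn, (-2 : ℤ) ^ j := by
  rw [Finset.sum_eq_ite_zero_add_sum_preimage_succ, Finset.mul_sum, sub_eq_add_neg,
    ← Finset.sum_neg_distrib, pow_zero]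
  simp only [pow_succ, mul_comm _ (-2 : ℤ), neg_mul]

theorem negaDigit_zero (n : ℤ) : negaDigit n 0 = (n % 2).toNat := by
  rw [negaDigit, negaDigits]
  split_ifs with h <;> simp [h]

theorem negaDigit_succ (n : ℤ) (i : ℕ) :
    negaDigit n (i + 1) = negaDigit ((n % 2 - n) / 2) i := by
  rw [negaDigit, negaDigits]
  split_ifs with h
  · simp [h, negaDigit, negaDigits]
  · rfl

theorem negaDigit_sum_neg_two_pow (S : Finset ℕ) (i : ℕ) :
    negaDigit (∑ j ∈ S, (-2 : ℤ) ^ j) i = if i ∈ S then 1 else 0 := by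
  induction i generalizing S with
  | zero =>
    rw [negaDigit_zero, sum_neg_two_pow_eq_ite_sub_two_mul]
    split_ifs <;> omega
  | succ i ih =>
    have hshift : ∀ c T : ℤ, c = 0 ∨ c = 1 → ((c - 2 * T) % 2 - (c - 2 * T)) / 2 = T := by
      omega
    rw [negaDigit_succ, sum_neg_two_pow_eq_ite_sub_two_mul, hshift _ _ (by split_ifs <;> simp), ih]
    simp only [Finset.mem_preimage, Nat.succ_eq_add_one]

theorem sum_neg_two_pow_eq_of_even {m k : ℕ} (hm : 2 ≤ m) (hmo : Odd m) (hk : Even k) :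
    ∑ j ∈ {0, 1, m, m + k + 1}, (-2 : ℤ) ^ j = 2 ^ (m + k + 1) - 2 ^ m - 1 := by
  rw [Finset.sum_insert (by grind), Finset.sum_insert (by grind), Finset.sum_insert (by grind),
    Finset.sum_singleton, hmo.neg_pow, (hmo.add_even hk).add_one.neg_pow]
  ring

theorem sum_neg_two_pow_eq_of_odd {m k : ℕ} (hm : 2 ≤ m) (hmo : Odd m) (hk : Odd k) :
    ∑ j ∈ {0, 1, m, m + k + 1, m + k + 2}, (-2 : ℤ) ^ j = 2 ^ (m + k + 1) - 2 ^ m - 1 := by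
  have hsum : Even (m + k) := hmo.add_odd hk
  rw [Finset.sum_insert (by grind), Finset.sum_insert (by grind), Finset.sum_insert (by grind),
    Finset.sum_insert (by grind), Finset.sum_singleton, hmo.neg_pow, hsum.add_one.neg_pow,
    (hsum.add even_two).neg_pow]
  ring

theorem stmt16 (m k : ℕ) (hm : 3 ≤ m) (hmo : Odd m) (i : ℕ) :
    negaDigit ((2 : ℤ) ^ (m + k + 1) - 2 ^ m - 1) i =
      if Even k then (if i = 0 ∨ i = 1 ∨ i = m ∨ i = m + k + 1 then 1 else 0)
      else (if i = 0 ∨ i = 1 ∨ i = m ∨ i = m + k + 1 ∨ i = m + k + 2 then 1 else 0) := by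
  rcases Nat.even_or_odd k with hk | hk
  · rw [if_pos hk, ← sum_neg_two_pow_eq_of_even (by omega) hmo hk, negaDigit_sum_neg_two_pow]
    simp only [Finset.mem_insert, Finset.mem_singleton]
  · rw [if_neg (Nat.not_even_iff_odd.mpr hk), ← sum_neg_two_pow_eq_of_odd (by omega) hmo hk,
      negaDigit_sum_neg_two_pow]
    simp only [Finset.mem_insert, Finset.mem_singleton]
end

section
/- Let t(n) be the Thue–Morse sequence (parity of the number of 1's in the binary representation of n), and set u(n) = (−1)^{t(n)}. For every positive integer a and every k ≥ 0, for each nonnegative integer n there exists x ∈ {a, a + 2^k, a + 2^(k+1)} such that t(n + x) = t(n). -/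
/-- Thue-Morse sequence: parity of the number of 1's in binary. -/
def t (n : ℕ) : ℕ := (Nat.digits 2 n).sum % 2

lemma t_lt_two (n : ℕ) : t n < 2 := Nat.mod_lt _ (by norm_num)

lemma t_two_mul (m : ℕ) : t (2 * m) = t m := by
  rcases Nat.eq_zero_or_pos m with h | h
  · simp [h]
  · unfold t
    rw [Nat.digits_def' (by norm_num : 1 < 2) (by omega)]
    simp [Nat.mul_div_cancel_left _ (by norm_num : 0 < 2), Nat.mul_mod_right]

lemma t_two_mul_add_one (m : ℕ) : t (2 * m + 1) = (t m + 1) % 2 := by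
  unfold t
  rw [Nat.digits_def' (by norm_num : 1 < 2) (by omega)]
  have h1 : (2 * m + 1) % 2 = 1 := by omega
  have h2 : (2 * m + 1) / 2 = m := by omega
  rw [h1, h2]
  simp [Nat.add_mod, Nat.add_comm]

lemma key : ∀ k m : ℕ, ¬ (t (m + 2 ^ k) = t m ∧ t (m + 2 ^ (k + 1)) = t m) := by
  intro k
  induction k with
  | zero =>
    intro m ⟨h1, h2⟩
    rcases Nat.even_or_odd m with ⟨q, hq⟩ | ⟨q, hq⟩
    · subst hq
      have e1 : t (q + q + 2 ^ 0) = (t q + 1) % 2 := by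
        have : q + q + 2 ^ 0 = 2 * q + 1 := by ring
        rw [this, t_two_mul_add_one]
      have e0 : t (q + q) = t q := by
        have : q + q = 2 * q := by ring
        rw [this, t_two_mul]
      have := t_lt_two q
      omega
    · subst hq
      have e0 : t (2 * q + 1) = (t q + 1) % 2 := t_two_mul_add_one q
      have e1 : t (2 * q + 1 + 2 ^ 0) = t (q + 1) := by
        have : 2 * q + 1 + 2 ^ 0 = 2 * (q + 1) := by ring
        rw [this, t_two_mul]
      have e2 : t (2 * q + 1 + 2 ^ (0 + 1)) = (t (q + 1) + 1) % 2 := by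
        have : 2 * q + 1 + 2 ^ (0 + 1) = 2 * (q + 1) + 1 := by ring
        rw [this, t_two_mul_add_one]
      have := t_lt_two q
      have := t_lt_two (q + 1)
      omega
  | succ k ih =>
    intro m ⟨h1, h2⟩
    rcases Nat.even_or_odd m with ⟨q, hq⟩ | ⟨q, hq⟩
    · subst hq
      have e0 : t (q + q) = t q := by rw [show q + q = 2 * q by ring, t_two_mul]
      have e1 : t (q + q + 2 ^ (k + 1)) = t (q + 2 ^ k) := by
        rw [show q + q + 2 ^ (k + 1) = 2 * (q + 2 ^ k) by ring, t_two_mul]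
      have e2 : t (q + q + 2 ^ (k + 1 + 1)) = t (q + 2 ^ (k + 1)) := by
        rw [show q + q + 2 ^ (k + 1 + 1) = 2 * (q + 2 ^ (k + 1)) by ring, t_two_mul]
      exact ih q ⟨by omega, by omega⟩
    · subst hq
      have e0 : t (2 * q + 1) = (t q + 1) % 2 := t_two_mul_add_one q
      have e1 : t (2 * q + 1 + 2 ^ (k + 1)) = (t (q + 2 ^ k) + 1) % 2 := by
        rw [show 2 * q + 1 + 2 ^ (k + 1) = 2 * (q + 2 ^ k) + 1 by ring, t_two_mul_add_one]
      have e2 : t (2 * q + 1 + 2 ^ (k + 1 + 1)) = (t (q + 2 ^ (k + 1)) + 1) % 2 := by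
        rw [show 2 * q + 1 + 2 ^ (k + 1 + 1) = 2 * (q + 2 ^ (k + 1)) + 1 by ring, t_two_mul_add_one]
      have b1 := t_lt_two q
      have b2 := t_lt_two (q + 2 ^ k)
      have b3 := t_lt_two (q + 2 ^ (k + 1))
      exact ih q ⟨by omega, by omega⟩

theorem stmt18 (a : ℕ) (ha : 1 ≤ a) (k n : ℕ) :
    ∃ x ∈ ({a, a + 2 ^ k, a + 2 ^ (k + 1)} : Set ℕ), t (n + x) = t n := by
  by_cases h1 : t (n + a) = t n
  · exact ⟨a, by simp, h1⟩
  by_cases h2 : t (n + (a + 2 ^ k)) = t n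
  · exact ⟨a + 2 ^ k, by simp, h2⟩
  by_cases h3 : t (n + (a + 2 ^ (k + 1))) = t n
  · exact ⟨a + 2 ^ (k + 1), by simp, h3⟩
  exfalso
  have b0 := t_lt_two n
  have b1 := t_lt_two (n + a)
  have b2 := t_lt_two (n + a + 2 ^ k)
  have b3 := t_lt_two (n + a + 2 ^ (k + 1))
  have e2 : n + (a + 2 ^ k) = n + a + 2 ^ k := by ring
  have e3 : n + (a + 2 ^ (k + 1)) = n + a + 2 ^ (k + 1) := by ring
  rw [e2] at h2; rw [e3] at h3
  exact key k (n + a) ⟨by omega, by omega⟩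
end
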